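/- The canonical model of 2CH is a chromatic hypergraph: for each agent a ∈ A, the relation R_a is functional (if S_E R_a S_a and S_E R_a S'_a then S_a = S'_a), the relation R_a is surjective (for every MCS S_a of sort a there is an MCS S_E of the world sort with S_E R_a S_a), and for every MCS S_E of the world sort there exists an agent a ∈ A and an MCS S_a of sort a with S_E R_a S_a. -/

import Mathlib

/-!
Everything reduces to maximal consistent sets in the two classical calculi of agent and world
formulas. Functionality: `φ ∈ S_a` gives `□_a E_a φ ∈ S_a` (the unit of the adjunction), hence
`E_a φ ∈ S_E`, hence `◇_a E_a φ ∈ S'_a` and `φ ∈ S'_a` by the functionality axiom.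
Surjectivity: `S_E R_a S_a` holds as soon as `S_E ⊇ {Φ | □_a Φ ∈ S_a}`, and this set is consistent
because `E_a (⋀ □_a Φᵢ) → ⋀ Φᵢ` (counit) and `◇_a ⊤` (surjectivity axiom) are provable; extend it
by Lindenbaum. Totality: the non-emptiness axiom puts some `E_a ⊤` into `S_E`, and then
`{◇_a Φ | Φ ∈ S_E}` is consistent, since by adjunction `⊢ ⋀ ◇_a Φᵢ → ⊥` would give
`⊢ ⋀ Φᵢ → A_a ⊥`, and `A_a ⊥` is `¬ E_a ⊤`.
-/

/-! ## Syntax of the two-level chromatic hypergraph logic 2CH -/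

mutual
/-- Agent formulas of sort `a`, for each agent `a : A`. -/
inductive AForm (A : Type) (APa : A → Type) (APe : Type) : A → Type where
  | atom {a : A} : APa a → AForm A APa APe a
  | bot  {a : A} : AForm A APa APe a
  | neg  {a : A} : AForm A APa APe a → AForm A APa APe a
  | and  {a : A} : AForm A APa APe a → AForm A APa APe a → AForm A APa APe a
  | dia  (a : A) : WForm A APa APe → AForm A APa APe a

/-- World formulas. -/
inductive WForm (A : Type) (APa : A → Type) (APe : Type) : Type where
  | atom : APe → WForm A APa APe
  | bot  : WForm A APa APe
  | neg  : WForm A APa APe → WForm A APa APe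
  | and  : WForm A APa APe → WForm A APa APe → WForm A APa APe
  | exi  (a : A) : AForm A APa APe a → WForm A APa APe
end

variable {A : Type} {APa : A → Type} {APe : Type}

/-- Implication of agent formulas. -/
def implA {a : A} (φ ψ : AForm A APa APe a) : AForm A APa APe a := .neg (.and φ (.neg ψ))
/-- Disjunction of agent formulas. -/
def orA {a : A} (φ ψ : AForm A APa APe a) : AForm A APa APe a := .neg (.and (.neg φ) (.neg ψ))
/-- `⊤` as an agent formula. -/
def topA (a : A) : AForm A APa APe a := .neg .bot
/-- Implication of world formulas. -/
def implW (Φ Ψ : WForm A APa APe) : WForm A APa APe := .neg (.and Φ (.neg Ψ))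
/-- Disjunction of world formulas. -/
def orW (Φ Ψ : WForm A APa APe) : WForm A APa APe := .neg (.and (.neg Φ) (.neg Ψ))
/-- The dual modality `□_a Φ := ¬◇_a ¬Φ`. -/
def boxF (a : A) (Φ : WForm A APa APe) : AForm A APa APe a := .neg (.dia a (.neg Φ))
/-- The dual modality `A_a φ := ¬E_a ¬φ`. -/
def allF (a : A) (φ : AForm A APa APe a) : WForm A APa APe := .neg (.exi a (.neg φ))
/-- Finite disjunction of a list of world formulas. -/
def listOrW : List (WForm A APa APe) → WForm A APa APe
  | [] => .bot
  | Φ :: rest => orW Φ (listOrW rest)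

/-- The non-emptiness axiom `⋁_{a∈A} E_a ⊤`. -/
noncomputable def neAxiom (A : Type) [Fintype A] (APa : A → Type) (APe : Type) : WForm A APa APe :=
  listOrW (((Finset.univ : Finset A).toList).map fun a => WForm.exi a (topA a))

/-- `φ` is an instance of a classical propositional tautology (agent sort):
every Boolean valuation respecting `⊥`, `¬`, `∧` makes it true. -/
def ATaut {a : A} (φ : AForm A APa APe a) : Prop :=
  ∀ v : AForm A APa APe a → Bool,
    v .bot = false →
    (∀ ψ : AForm A APa APe a, v ψ.neg = !(v ψ)) →
    (∀ ψ χ : AForm A APa APe a, v (ψ.and χ) = (v ψ && v χ)) →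
    v φ = true

/-- `Φ` is an instance of a classical propositional tautology (world sort). -/
def WTaut (Φ : WForm A APa APe) : Prop :=
  ∀ v : WForm A APa APe → Bool,
    v .bot = false →
    (∀ Ψ : WForm A APa APe, v Ψ.neg = !(v Ψ)) →
    (∀ Ψ Χ : WForm A APa APe, v (Ψ.and Χ) = (v Ψ && v Χ)) →
    v Φ = true

/-! ## The proof system of 2CH -/

mutual
/-- Derivability `⊢_a` of agent formulas of sort `a`. -/
inductive ProveA (A : Type) [Fintype A] (APa : A → Type) (APe : Type) :
    ∀ {a : A}, AForm A APa APe a → Prop where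
  | taut {a : A} {φ : AForm A APa APe a} : ATaut φ → ProveA A APa APe φ
  | mp {a : A} {φ ψ : AForm A APa APe a} :
      ProveA A APa APe (implA φ ψ) → ProveA A APa APe φ → ProveA A APa APe ψ
  | nec {a : A} {Φ : WForm A APa APe} :
      ProveE A APa APe Φ → ProveA A APa APe (boxF a Φ)
  | monoDia {a : A} {Φ Ψ : WForm A APa APe} :
      ProveE A APa APe (implW Φ Ψ) →
      ProveA A APa APe (implA (AForm.dia a Φ) (AForm.dia a Ψ))
  | monoBox {a : A} {Φ Ψ : WForm A APa APe} :
      ProveE A APa APe (implW Φ Ψ) →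
      ProveA A APa APe (implA (boxF a Φ) (boxF a Ψ))
  | adj1 {a : A} {Φ : WForm A APa APe} {ψ : AForm A APa APe a} :
      ProveE A APa APe (implW Φ (allF a ψ)) →
      ProveA A APa APe (implA (AForm.dia a Φ) ψ)
  | adj2 {a : A} {φ : AForm A APa APe a} {Ψ : WForm A APa APe} :
      ProveE A APa APe (implW (WForm.exi a φ) Ψ) →
      ProveA A APa APe (implA φ (boxF a Ψ))
  | surj {a : A} {φ : AForm A APa APe a} :
      ProveA A APa APe (implA φ (AForm.dia a (WForm.exi a φ)))
  | func {a : A} {φ : AForm A APa APe a} :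
      ProveA A APa APe (implA (AForm.dia a (WForm.exi a φ)) φ)

/-- Derivability `⊢_e` of world formulas. -/
inductive ProveE (A : Type) [Fintype A] (APa : A → Type) (APe : Type) :
    WForm A APa APe → Prop where
  | taut {Φ : WForm A APa APe} : WTaut Φ → ProveE A APa APe Φ
  | mp {Φ Ψ : WForm A APa APe} :
      ProveE A APa APe (implW Φ Ψ) → ProveE A APa APe Φ → ProveE A APa APe Ψ
  | nec {a : A} {φ : AForm A APa APe a} :
      ProveA A APa APe φ → ProveE A APa APe (allF a φ)
  | monoExi {a : A} {φ ψ : AForm A APa APe a} :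
      ProveA A APa APe (implA φ ψ) →
      ProveE A APa APe (implW (WForm.exi a φ) (WForm.exi a ψ))
  | monoAll {a : A} {φ ψ : AForm A APa APe a} :
      ProveA A APa APe (implA φ ψ) →
      ProveE A APa APe (implW (allF a φ) (allF a ψ))
  | adj1 {a : A} {Φ : WForm A APa APe} {ψ : AForm A APa APe a} :
      ProveA A APa APe (implA (AForm.dia a Φ) ψ) →
      ProveE A APa APe (implW Φ (allF a ψ))
  | adj2 {a : A} {φ : AForm A APa APe a} {Ψ : WForm A APa APe} :
      ProveA A APa APe (implA φ (boxF a Ψ)) →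
      ProveE A APa APe (implW (WForm.exi a φ) Ψ)
  | nonempty : ProveE A APa APe (neAxiom A APa APe)
end

/-! ## Chromatic hypergraphs and their models -/

/-- A chromatic hypergraph over the set of agents `A`. -/
structure ChromHyp (A : Type) where
  /-- hyperedges (worlds) -/
  E : Type
  /-- views of agent `a` -/
  V : A → Type
  /-- the surjective partial function assigning to a hyperedge the view of agent `a` in it -/
  proj : ∀ a : A, E → Option (V a)
  surj : ∀ (a : A) (v : V a), ∃ e : E, proj a e = some v
  edge_nonempty : ∀ e : E, ∃ a : A, (proj a e).isSome

/-- A chromatic hypergraph model: a chromatic hypergraph together with valuations. -/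
structure ChromHypModel (A : Type) (APa : A → Type) (APe : Type) extends ChromHyp A where
  valA : ∀ a : A, APa a → Set (V a)
  valE : APe → Set E

mutual
/-- Satisfaction `H, v ⊨_a φ` of an agent formula at a view of agent `a`. -/
def SatA (H : ChromHypModel A APa APe) : ∀ (a : A), H.V a → AForm A APa APe a → Prop
  | a, v, .atom p => v ∈ H.valA a p
  | _, _, .bot => False
  | a, v, .neg φ => ¬ SatA H a v φ
  | a, v, .and φ ψ => SatA H a v φ ∧ SatA H a v ψ
  | a, v, .dia _ Φ => ∃ e : H.E, H.proj a e = some v ∧ SatE H e Φ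

/-- Satisfaction `H, e ⊨_e Φ` of a world formula at a hyperedge. -/
def SatE (H : ChromHypModel A APa APe) : H.E → WForm A APa APe → Prop
  | e, .atom p => e ∈ H.valE p
  | _, .bot => False
  | e, .neg Φ => ¬ SatE H e Φ
  | e, .and Φ Ψ => SatE H e Φ ∧ SatE H e Ψ
  | e, .exi a φ => ∃ v : H.V a, H.proj a e = some v ∧ SatA H a v φ
end


/-! ## Consistent and maximal consistent sets -/

variable (A : Type) [Fintype A] (APa : A → Type) (APe : Type)

/-- Finite conjunction of a list of agent formulas. -/
def listAndA {a : A} : List (AForm A APa APe a) → AForm A APa APe a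
  | [] => topA a
  | φ :: rest => .and φ (listAndA rest)

/-- Finite conjunction of a list of world formulas. -/
def listAndW : List (WForm A APa APe) → WForm A APa APe
  | [] => .neg .bot
  | Φ :: rest => .and Φ (listAndW rest)

/-- A set of agent formulas of sort `a` is consistent if `⊥` is not derivable from it. -/
def AConsistent {a : A} (S : Set (AForm A APa APe a)) : Prop :=
  ¬ ∃ L : List (AForm A APa APe a), (∀ φ ∈ L, φ ∈ S) ∧
      ProveA A APa APe (implA (listAndA A APa APe L) AForm.bot)

/-- A set of world formulas is consistent if `⊥` is not derivable from it. -/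
def WConsistent (S : Set (WForm A APa APe)) : Prop :=
  ¬ ∃ L : List (WForm A APa APe), (∀ Φ ∈ L, Φ ∈ S) ∧
      ProveE A APa APe (implW (listAndW A APa APe L) WForm.bot)

/-- A maximal consistent set (MCS) of agent formulas of sort `a`. -/
def AMCS {a : A} (S : Set (AForm A APa APe a)) : Prop :=
  AConsistent A APa APe S ∧
    ∀ T : Set (AForm A APa APe a), AConsistent A APa APe T → S ⊆ T → S = T

/-- A maximal consistent set (MCS) of world formulas. -/
def WMCS (S : Set (WForm A APa APe)) : Prop :=
  WConsistent A APa APe S ∧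
    ∀ T : Set (WForm A APa APe), WConsistent A APa APe T → S ⊆ T → S = T

/-- The relation `R_a` of the canonical model between world-sort MCSs and sort-`a` MCSs:
`S_E R_a S_a` iff for every world formula `Φ ∈ S_E`, `◇_a Φ ∈ S_a`. -/
def canonR (a : A) (SE : Set (WForm A APa APe)) (Sa : Set (AForm A APa APe a)) : Prop :=
  ∀ Φ : WForm A APa APe, Φ ∈ SE → AForm.dia a Φ ∈ Sa

/-- Both sorts of 2CH are classical propositional calculi over their own formulas, so their
maximal consistent sets are treated once, for an arbitrary such calculus. -/
structure PropSyntax where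
  Form : Type
  bot : Form
  neg : Form → Form
  conj : Form → Form → Form

namespace PropSyntax

variable (L : PropSyntax)

def imp (φ ψ : L.Form) : L.Form := L.neg (L.conj φ (L.neg ψ))

def disj (φ ψ : L.Form) : L.Form := L.neg (L.conj (L.neg φ) (L.neg ψ))

def IsTautology (φ : L.Form) : Prop :=
  ∀ v : L.Form → Bool, v L.bot = false → (∀ ψ, v (L.neg ψ) = !(v ψ)) →
    (∀ ψ χ, v (L.conj ψ χ) = (v ψ && v χ)) → v φ = true

def listConj : List L.Form → L.Form
  | [] => L.neg L.bot
  | φ :: l => L.conj φ (listConj l)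

def listDisj : List L.Form → L.Form
  | [] => L.bot
  | φ :: l => L.disj φ (listDisj l)

end PropSyntax

structure ClassicalCalculus (L : PropSyntax) where
  Provable : L.Form → Prop
  taut {φ : L.Form} : L.IsTautology φ → Provable φ
  mp {φ ψ : L.Form} : Provable (L.imp φ ψ) → Provable φ → Provable ψ

namespace ClassicalCalculus

variable {L : PropSyntax} (C : ClassicalCalculus L)

local infixr:60 " ⟶ " => L.imp

theorem imp_refl (φ : L.Form) : C.Provable (φ ⟶ φ) :=
  C.taut fun _ _ hn hc => by simp only [PropSyntax.imp, hn, hc]; grind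

theorem imp_trans {φ ψ χ : L.Form} (h₁ : C.Provable (φ ⟶ ψ)) (h₂ : C.Provable (ψ ⟶ χ)) :
    C.Provable (φ ⟶ χ) :=
  C.mp (C.mp (C.taut (φ := (φ ⟶ ψ) ⟶ (ψ ⟶ χ) ⟶ φ ⟶ χ) fun _ _ hn hc => by
    simp only [PropSyntax.imp, hn, hc]; grind) h₁) h₂

theorem imp_of_provable {φ : L.Form} (ψ : L.Form) (h : C.Provable φ) : C.Provable (ψ ⟶ φ) :=
  C.mp (C.taut (φ := φ ⟶ ψ ⟶ φ) fun _ _ hn hc => by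
    simp only [PropSyntax.imp, hn, hc]; grind) h

theorem imp_conj {φ ψ χ : L.Form} (h₁ : C.Provable (φ ⟶ ψ)) (h₂ : C.Provable (φ ⟶ χ)) :
    C.Provable (φ ⟶ L.conj ψ χ) :=
  C.mp (C.mp (C.taut (φ := (φ ⟶ ψ) ⟶ (φ ⟶ χ) ⟶ φ ⟶ L.conj ψ χ) fun _ _ hn hc => by
    simp only [PropSyntax.imp, hn, hc]; grind) h₁) h₂

theorem conj_imp_left (φ ψ : L.Form) : C.Provable (L.conj φ ψ ⟶ φ) :=
  C.taut fun _ _ hn hc => by simp only [PropSyntax.imp, hn, hc]; grind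

theorem conj_imp_right (φ ψ : L.Form) : C.Provable (L.conj φ ψ ⟶ ψ) :=
  C.taut fun _ _ hn hc => by simp only [PropSyntax.imp, hn, hc]; grind

theorem imp_neg_of_conj_imp_bot {φ ψ : L.Form} (h : C.Provable (L.conj φ ψ ⟶ L.bot)) :
    C.Provable (ψ ⟶ L.neg φ) :=
  C.mp (C.taut (φ := (L.conj φ ψ ⟶ L.bot) ⟶ ψ ⟶ L.neg φ) fun _ hb hn hc => by
    simp only [PropSyntax.imp, hb, hn, hc]; grind) h

theorem imp_bot_of_imp_of_imp_neg {φ ψ : L.Form} (h₁ : C.Provable (φ ⟶ ψ))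
    (h₂ : C.Provable (φ ⟶ L.neg ψ)) : C.Provable (φ ⟶ L.bot) :=
  C.mp (C.mp (C.taut (φ := (φ ⟶ ψ) ⟶ (φ ⟶ L.neg ψ) ⟶ φ ⟶ L.bot) fun _ hb hn hc => by
    simp only [PropSyntax.imp, hb, hn, hc]; grind) h₁) h₂

theorem neg_imp_neg {φ ψ : L.Form} (h : C.Provable (φ ⟶ ψ)) :
    C.Provable (L.neg ψ ⟶ L.neg φ) :=
  C.mp (C.taut (φ := (φ ⟶ ψ) ⟶ L.neg ψ ⟶ L.neg φ) fun _ _ hn hc => by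
    simp only [PropSyntax.imp, hn, hc]; grind) h

theorem neg_neg_imp (φ : L.Form) : C.Provable (L.neg (L.neg φ) ⟶ φ) :=
  C.taut fun _ _ hn hc => by simp only [PropSyntax.imp, hn, hc]; grind

theorem listConj_imp_of_mem {M : List L.Form} {φ : L.Form} (h : φ ∈ M) :
    C.Provable (L.listConj M ⟶ φ) := by
  induction M with
  | nil => exact absurd h List.not_mem_nil
  | cons ψ M ih =>
    rcases List.mem_cons.1 h with rfl | h
    · exact C.conj_imp_left _ _
    · exact C.imp_trans (C.conj_imp_right _ _) (ih h)

theorem listConj_imp_listConj_of_subset {M N : List L.Form} (h : ∀ φ ∈ N, φ ∈ M) :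
    C.Provable (L.listConj M ⟶ L.listConj N) := by
  induction N with
  | nil =>
    exact C.taut fun _ hb hn hc => by
      simp only [PropSyntax.imp, PropSyntax.listConj, hb, hn, hc]; grind
  | cons φ N ih =>
    exact C.imp_conj (C.listConj_imp_of_mem (h φ List.mem_cons_self))
      (ih fun ψ hψ => h ψ (List.mem_cons_of_mem φ hψ))

def Consistent (T : Set L.Form) : Prop :=
  ¬ ∃ M : List L.Form, (∀ φ ∈ M, φ ∈ T) ∧ C.Provable (L.listConj M ⟶ L.bot)

def IsMCS (T : Set L.Form) : Prop :=
  C.Consistent T ∧ ∀ U, C.Consistent U → T ⊆ U → T = U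

theorem isOfFiniteCharacter_consistent : Order.IsOfFiniteCharacter {T | C.Consistent T} :=
  fun _ => ⟨fun hT _ hUT _ ⟨M, hM, h⟩ => hT ⟨M, fun φ hφ => hUT (hM φ hφ), h⟩,
    fun hT ⟨M, hM, h⟩ => hT {φ | φ ∈ M} hM (List.finite_toSet M) ⟨M, fun _ => id, h⟩⟩

theorem exists_isMCS_superset {T : Set L.Form} (hT : C.Consistent T) :
    ∃ U, T ⊆ U ∧ C.IsMCS U := by
  obtain ⟨U, hTU, hU, hmax⟩ := C.isOfFiniteCharacter_consistent.exists_maximal hT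
  exact ⟨U, hTU, hU, fun V hV hUV => hUV.antisymm (hmax hV hUV)⟩

theorem exists_listConj_imp_neg_of_not_consistent_insert {T : Set L.Form} {φ : L.Form}
    (h : ¬ C.Consistent (insert φ T)) :
    ∃ M : List L.Form, (∀ ψ ∈ M, ψ ∈ T) ∧ C.Provable (L.listConj M ⟶ L.neg φ) := by
  classical
  obtain ⟨M, hM, hbot⟩ := not_not.1 h
  have hsub : C.Provable (L.listConj (φ :: M.filter (· ≠ φ)) ⟶ L.listConj M) := by
    refine C.listConj_imp_listConj_of_subset fun ψ hψ => ?_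
    by_cases hψφ : ψ = φ
    · exact hψφ ▸ List.mem_cons_self
    · exact List.mem_cons_of_mem φ (List.mem_filter.2 ⟨hψ, decide_eq_true hψφ⟩)
  refine ⟨M.filter (· ≠ φ), fun ψ hψ => ?_, C.imp_neg_of_conj_imp_bot (C.imp_trans hsub hbot)⟩
  rw [List.mem_filter, decide_eq_true_iff] at hψ
  exact (hM ψ hψ.1).resolve_left hψ.2

namespace IsMCS

variable {C} {T : Set L.Form}

theorem not_consistent_insert (hT : C.IsMCS T) {φ : L.Form} (hφ : φ ∉ T) :
    ¬ C.Consistent (insert φ T) :=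
  fun hcon => hφ (hT.2 _ hcon (Set.subset_insert φ T) ▸ Set.mem_insert φ T)

theorem mem_of_listConj_imp (hT : C.IsMCS T) {M : List L.Form} (hM : ∀ ψ ∈ M, ψ ∈ T)
    {φ : L.Form} (h : C.Provable (L.listConj M ⟶ φ)) : φ ∈ T := by
  by_contra hφ
  obtain ⟨N, hN, hneg⟩ :=
    C.exists_listConj_imp_neg_of_not_consistent_insert (hT.not_consistent_insert hφ)
  refine hT.1 ⟨M ++ N, fun ψ hψ => (List.mem_append.1 hψ).elim (hM ψ) (hN ψ), ?_⟩
  have hM' : C.Provable (L.listConj (M ++ N) ⟶ L.listConj M) :=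
    C.listConj_imp_listConj_of_subset fun ψ hψ => List.mem_append_left N hψ
  have hN' : C.Provable (L.listConj (M ++ N) ⟶ L.listConj N) :=
    C.listConj_imp_listConj_of_subset fun ψ hψ => List.mem_append_right M hψ
  exact C.imp_bot_of_imp_of_imp_neg (C.imp_trans hM' h) (C.imp_trans hN' hneg)

theorem mem_of_provable (hT : C.IsMCS T) {φ : L.Form} (h : C.Provable φ) : φ ∈ T :=
  hT.mem_of_listConj_imp (M := []) (by simp) (C.imp_of_provable _ h)

theorem mem_of_imp (hT : C.IsMCS T) {φ ψ : L.Form} (hφ : φ ∈ T) (h : C.Provable (φ ⟶ ψ)) :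
    ψ ∈ T :=
  hT.mem_of_listConj_imp (M := [φ]) (by simpa using hφ) (C.imp_trans (C.conj_imp_left _ _) h)

theorem neg_mem_iff (hT : C.IsMCS T) {φ : L.Form} : L.neg φ ∈ T ↔ φ ∉ T := by
  refine ⟨fun hneg hφ => hT.1 ⟨[φ, L.neg φ], by simp [hφ, hneg], ?_⟩, fun hφ => ?_⟩
  · exact C.imp_bot_of_imp_of_imp_neg (C.listConj_imp_of_mem (φ := φ) (by simp))
      (C.listConj_imp_of_mem (by simp))
  · obtain ⟨M, hM, h⟩ :=
      C.exists_listConj_imp_neg_of_not_consistent_insert (hT.not_consistent_insert hφ)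
    exact hT.mem_of_listConj_imp hM h

theorem exists_mem_of_listDisj_mem (hT : C.IsMCS T) {M : List L.Form}
    (h : L.listDisj M ∈ T) : ∃ φ ∈ M, φ ∈ T := by
  induction M with
  | nil => exact (hT.1 ⟨[L.bot], by simpa [PropSyntax.listDisj] using h, C.conj_imp_left _ _⟩).elim
  | cons φ M ih =>
    by_cases hφ : φ ∈ T
    · exact ⟨φ, List.mem_cons_self, hφ⟩
    replace h : L.disj φ (L.listDisj M) ∈ T := h
    have hdisj : L.listDisj M ∈ T :=
      hT.mem_of_listConj_imp (M := [L.disj φ (L.listDisj M), L.neg φ])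
        (by simp [h, hT.neg_mem_iff.2 hφ]) (C.taut fun _ hb hn hc => by
          simp only [PropSyntax.imp, PropSyntax.disj, PropSyntax.listConj, hb, hn, hc]; grind)
    obtain ⟨ψ, hψM, hψ⟩ := ih hdisj
    exact ⟨ψ, List.mem_cons_of_mem φ hψM, hψ⟩

end IsMCS

end ClassicalCalculus

theorem List.exists_map_eq_of_forall_mem_image {α β : Type*} {f : α → β} {s : Set α}
    {l : List β} (h : ∀ b ∈ l, b ∈ f '' s) :
    ∃ l' : List α, (∀ a ∈ l', a ∈ s) ∧ l'.map f = l := by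
  induction l with
  | nil => exact ⟨[], by simp, rfl⟩
  | cons b l ih =>
    obtain ⟨a, ha, rfl⟩ := h b List.mem_cons_self
    obtain ⟨l', hl', rfl⟩ := ih fun b hb => h b (List.mem_cons_of_mem _ hb)
    exact ⟨a :: l', by simpa [ha] using hl', rfl⟩

abbrev agentSyntax (A : Type) (APa : A → Type) (APe : Type) (a : A) : PropSyntax :=
  ⟨AForm A APa APe a, .bot, .neg, .and⟩

abbrev worldSyntax (A : Type) (APa : A → Type) (APe : Type) : PropSyntax :=
  ⟨WForm A APa APe, .bot, .neg, .and⟩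

def agentCalculus (a : A) : ClassicalCalculus (agentSyntax A APa APe a) where
  Provable φ := ProveA A APa APe φ
  taut := ProveA.taut
  mp := ProveA.mp

def worldCalculus : ClassicalCalculus (worldSyntax A APa APe) where
  Provable Φ := ProveE A APa APe Φ
  taut := ProveE.taut
  mp := ProveE.mp

theorem listConj_agentSyntax {A : Type} {APa : A → Type} {APe : Type} {a : A}
    (M : List (AForm A APa APe a)) :
    (agentSyntax A APa APe a).listConj M = listAndA A APa APe M := by
  induction M with
  | nil => rfl
  | cons φ M ih => exact congrArg (AForm.and φ) ih

theorem listConj_worldSyntax {A : Type} {APa : A → Type} {APe : Type}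
    (M : List (WForm A APa APe)) :
    (worldSyntax A APa APe).listConj M = listAndW A APa APe M := by
  induction M with
  | nil => rfl
  | cons Φ M ih => exact congrArg (WForm.and Φ) ih

theorem listDisj_worldSyntax {A : Type} {APa : A → Type} {APe : Type}
    (M : List (WForm A APa APe)) : (worldSyntax A APa APe).listDisj M = listOrW M := by
  induction M with
  | nil => rfl
  | cons Φ M ih => exact congrArg (orW Φ) ih

section

variable {A APa APe}

local notation "𝒜" => agentCalculus A APa APe
local notation "𝒲" => worldCalculus A APa APe

theorem aconsistent_iff_consistent {a : A} {S : Set (AForm A APa APe a)} :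
    AConsistent A APa APe S ↔ (𝒜 a).Consistent S := by
  simp only [AConsistent, ClassicalCalculus.Consistent, listConj_agentSyntax]; rfl

theorem wconsistent_iff_consistent {S : Set (WForm A APa APe)} :
    WConsistent A APa APe S ↔ (𝒲).Consistent S := by
  simp only [WConsistent, ClassicalCalculus.Consistent, listConj_worldSyntax]; rfl

theorem amcs_iff_isMCS {a : A} {S : Set (AForm A APa APe a)} :
    AMCS A APa APe S ↔ (𝒜 a).IsMCS S := by
  simp only [AMCS, ClassicalCalculus.IsMCS, aconsistent_iff_consistent]

theorem wmcs_iff_isMCS {S : Set (WForm A APa APe)} : WMCS A APa APe S ↔ (𝒲).IsMCS S := by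
  simp only [WMCS, ClassicalCalculus.IsMCS, wconsistent_iff_consistent]

theorem ProveA.top (a : A) : ProveA A APa APe (topA a) :=
  ProveA.taut fun _ hb hn _ => by simp [topA, hn, hb]

theorem ProveE.neg_bot : ProveE A APa APe (.neg .bot) :=
  ProveE.taut fun _ hb hn _ => by simp [hn, hb]

theorem ProveA.imp_box_exi {a : A} (φ : AForm A APa APe a) :
    ProveA A APa APe (implA φ (boxF a (.exi a φ))) :=
  ProveA.adj2 ((𝒲).imp_refl _)

theorem ProveE.exi_box_imp (a : A) (Φ : WForm A APa APe) :
    ProveE A APa APe (implW (.exi a (boxF a Φ)) Φ) :=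
  ProveE.adj2 ((𝒜 a).imp_refl _)

theorem ProveE.exi_listAndA_box_imp (a : A) (M : List (WForm A APa APe)) :
    ProveE A APa APe
      (implW (.exi a (listAndA A APa APe (M.map (boxF a)))) (listAndW A APa APe M)) := by
  induction M with
  | nil => exact (𝒲).imp_of_provable _ ProveE.neg_bot
  | cons Φ M ih =>
    exact (𝒲).imp_conj
      ((𝒲).imp_trans (ProveE.monoExi ((𝒜 a).conj_imp_left _ _)) (ProveE.exi_box_imp a Φ))
      ((𝒲).imp_trans (ProveE.monoExi ((𝒜 a).conj_imp_right _ _)) ih)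

theorem ProveA.dia_listAndW_imp (a : A) (M : List (WForm A APa APe)) :
    ProveA A APa APe
      (implA (.dia a (listAndW A APa APe M)) (listAndA A APa APe (M.map (.dia a)))) := by
  induction M with
  | nil => exact (𝒜 a).imp_of_provable _ (ProveA.top a)
  | cons Φ M ih =>
    exact (𝒜 a).imp_conj (ProveA.monoDia ((𝒲).conj_imp_left _ _))
      ((𝒜 a).imp_trans (ProveA.monoDia ((𝒲).conj_imp_right _ _)) ih)

theorem ProveA.dia_top (a : A) : ProveA A APa APe (.dia a (.neg .bot)) :=
  ProveA.mp (ProveA.monoDia ((𝒲).imp_of_provable _ ProveE.neg_bot))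
    (ProveA.mp ProveA.surj (ProveA.top a))

theorem canonR_iff_forall_box_mem {a : A} {SE : Set (WForm A APa APe)}
    {Sa : Set (AForm A APa APe a)} (hSE : WMCS A APa APe SE) (hSa : AMCS A APa APe Sa) :
    canonR A APa APe a SE Sa ↔ ∀ Φ, boxF a Φ ∈ Sa → Φ ∈ SE := by
  rw [wmcs_iff_isMCS] at hSE
  rw [amcs_iff_isMCS] at hSa
  constructor
  · intro hR Φ hbox
    by_contra hΦ
    exact hSa.neg_mem_iff.1 hbox (hR _ (hSE.neg_mem_iff.2 hΦ))
  · intro hbox Φ hΦ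
    by_contra hdia
    have hbox_neg : boxF a (.neg Φ) ∈ Sa := hSa.mem_of_imp (hSa.neg_mem_iff.2 hdia)
      ((𝒜 a).neg_imp_neg (ProveA.monoDia ((𝒲).neg_neg_imp Φ)))
    exact hSE.neg_mem_iff.1 (hbox _ hbox_neg) hΦ

theorem canonR_subset {a : A} {SE : Set (WForm A APa APe)} {Sa Sa' : Set (AForm A APa APe a)}
    (hSE : WMCS A APa APe SE) (hSa : AMCS A APa APe Sa) (hSa' : AMCS A APa APe Sa')
    (hR : canonR A APa APe a SE Sa) (hR' : canonR A APa APe a SE Sa') : Sa ⊆ Sa' := by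
  intro φ hφ
  have hexi : WForm.exi a φ ∈ SE := (canonR_iff_forall_box_mem hSE hSa).1 hR _
    ((amcs_iff_isMCS.1 hSa).mem_of_imp hφ (ProveA.imp_box_exi φ))
  exact (amcs_iff_isMCS.1 hSa').mem_of_imp (hR' _ hexi) ProveA.func

theorem wconsistent_setOf_box_mem {a : A} {Sa : Set (AForm A APa APe a)}
    (hSa : AMCS A APa APe Sa) : WConsistent A APa APe {Φ | boxF a Φ ∈ Sa} := by
  rw [amcs_iff_isMCS] at hSa
  rintro ⟨M, hM, hbot⟩
  have hbox_bot :
      ProveA A APa APe (implA (listAndA A APa APe (M.map (boxF a))) (boxF a .bot)) :=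
    ProveA.adj2 ((𝒲).imp_trans (ProveE.exi_listAndA_box_imp a M) hbot)
  rw [← listConj_agentSyntax] at hbox_bot
  exact hSa.neg_mem_iff.1 (hSa.mem_of_listConj_imp (by simpa using hM) hbox_bot)
    (hSa.mem_of_provable (ProveA.dia_top a))

theorem exists_canonR_of_amcs {a : A} {Sa : Set (AForm A APa APe a)}
    (hSa : AMCS A APa APe Sa) : ∃ SE, WMCS A APa APe SE ∧ canonR A APa APe a SE Sa := by
  obtain ⟨SE, hsub, hSE⟩ :=
    (𝒲).exists_isMCS_superset (wconsistent_iff_consistent.1 (wconsistent_setOf_box_mem hSa))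
  rw [← wmcs_iff_isMCS] at hSE
  exact ⟨SE, hSE, (canonR_iff_forall_box_mem hSE hSa).2 fun _ h => hsub h⟩

theorem WMCS.exists_exi_top_mem {SE : Set (WForm A APa APe)} (hSE : WMCS A APa APe SE) :
    ∃ a, WForm.exi a (topA a) ∈ SE := by
  rw [wmcs_iff_isMCS] at hSE
  have hne := hSE.mem_of_provable ProveE.nonempty
  rw [neAxiom, ← listDisj_worldSyntax] at hne
  obtain ⟨Φ, hΦ, hΦSE⟩ := hSE.exists_mem_of_listDisj_mem hne
  obtain ⟨a, -, rfl⟩ := List.mem_map.1 hΦ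
  exact ⟨a, hΦSE⟩

theorem aconsistent_image_dia {a : A} {SE : Set (WForm A APa APe)} (hSE : WMCS A APa APe SE)
    (ha : WForm.exi a (topA a) ∈ SE) : AConsistent A APa APe (AForm.dia a '' SE) := by
  rw [wmcs_iff_isMCS] at hSE
  rintro ⟨M, hM, hbot⟩
  obtain ⟨N, hN, rfl⟩ := List.exists_map_eq_of_forall_mem_image hM
  have hall : ProveE A APa APe (implW (listAndW A APa APe N) (allF a .bot)) :=
    ProveE.adj1 ((𝒜 a).imp_trans (ProveA.dia_listAndW_imp a N) hbot)
  rw [← listConj_worldSyntax] at hall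
  -- `allF a ⊥` is literally the negation of `E_a ⊤`
  exact hSE.neg_mem_iff.1 (hSE.mem_of_listConj_imp hN hall) ha

theorem exists_canonR_of_wmcs {SE : Set (WForm A APa APe)} (hSE : WMCS A APa APe SE) :
    ∃ (a : A) (Sa : Set (AForm A APa APe a)), AMCS A APa APe Sa ∧ canonR A APa APe a SE Sa := by
  obtain ⟨a, ha⟩ := hSE.exists_exi_top_mem
  obtain ⟨Sa, hsub, hSa⟩ := (𝒜 a).exists_isMCS_superset
    (aconsistent_iff_consistent.1 (aconsistent_image_dia hSE ha))
  exact ⟨a, Sa, amcs_iff_isMCS.2 hSa, fun Φ hΦ => hsub ⟨Φ, hΦ, rfl⟩⟩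

end

/-- The canonical model of 2CH is a chromatic hypergraph: each relation `R_a` is
functional and surjective, and every world-sort MCS is related to some sort-`a` MCS
for at least one agent `a`. -/
theorem canonical_model_is_chromatic_hypergraph
    (A : Type) [Fintype A] (APa : A → Type) (APe : Type) :
    (∀ (a : A) (SE : Set (WForm A APa APe)) (Sa Sa' : Set (AForm A APa APe a)),
      WMCS A APa APe SE → AMCS A APa APe Sa → AMCS A APa APe Sa' →
      canonR A APa APe a SE Sa → canonR A APa APe a SE Sa' → Sa = Sa') ∧
    (∀ (a : A) (Sa : Set (AForm A APa APe a)), AMCS A APa APe Sa →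
      ∃ SE : Set (WForm A APa APe), WMCS A APa APe SE ∧ canonR A APa APe a SE Sa) ∧
    (∀ SE : Set (WForm A APa APe), WMCS A APa APe SE →
      ∃ (a : A) (Sa : Set (AForm A APa APe a)), AMCS A APa APe Sa ∧
        canonR A APa APe a SE Sa) :=
  ⟨fun _ _ _ _ hSE hSa hSa' hR hR' =>
    (canonR_subset hSE hSa hSa' hR hR').antisymm (canonR_subset hSE hSa' hSa hR' hR),
    fun _ _ hSa => exists_canonR_of_amcs hSa,
    fun _ hSE => exists_canonR_of_wmcs hSE⟩
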